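/- Suppose the running costs L^i : ℝ^n × ℝ^m × {0,...,T−1} → ℝ, the candidate potential P : ℝ^n × ℝ^m × {0,...,T−1} → ℝ, the terminal costs S^i : ℝ^n → ℝ, and the candidate terminal potential R : ℝ^n → ℝ are continuously differentiable, and that for every agent i, every k = 0,...,T−1, and all (x, u) ∈ ℝ^n × ℝ^m: ∂L^i(x, u, k)/∂x^i = ∂P(x, u, k)/∂x^i, ∂L^i(x, u, k)/∂u^i = ∂P(x, u, k)/∂u^i, and ∂S^i(x_T)/∂x^i_T = ∂R(x_T)/∂x^i_T for all x_T ∈ ℝ^n (partial derivatives taken with respect to agent i's state and action blocks). Then the game is a constrained dynamic potential game with potential (P, R); that is, for every agent i, every pair of strategies γ^i, ν^i of agent i, and every strategy profile γ^{-i} of the other agents: J^i(x_0, (γ^i, γ^{-i})) − J^i(x_0, (ν^i, γ^{-i})) = J(x_0, (γ^i, γ^{-i})) − J(x_0, (ν^i, γ^{-i})), where J(x_0, γ) = R(x_T) + Σ_{k=0}^{T−1} P(x_k, u_k, k). -/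

import Mathlib

/-!
Fix agent `i` and compare a profile `γ` with the deviation `(ν, γ^{-i})`. The dynamics are
decoupled, so the deviation only moves agent `i`'s own state and action blocks. The gradient
conditions say that `L^i - P` and `S^i - R` have zero partial derivative in exactly those blocks,
so they are constant in them (mean value theorem). Every summand of `J^i - J` therefore takes the
same value along both trajectories.
-/

open Function

noncomputable def traj {N : ℕ} {n m : Fin N → ℕ}
    (f : ∀ i : Fin N, (Fin (n i) → ℝ) → (Fin (m i) → ℝ) → ℕ → (Fin (n i) → ℝ))
    (x0 : ∀ i, Fin (n i) → ℝ) (γ : ∀ i, ℕ → Fin (m i) → ℝ) :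
    ℕ → ∀ i, Fin (n i) → ℝ
  | 0 => x0
  | (k + 1) => fun i => f i (traj f x0 γ k i) (γ i k) k

noncomputable def agentCost {N : ℕ} {n m : Fin N → ℕ} (T : ℕ)
    (f : ∀ i : Fin N, (Fin (n i) → ℝ) → (Fin (m i) → ℝ) → ℕ → (Fin (n i) → ℝ))
    (x0 : ∀ i, Fin (n i) → ℝ)
    (L : ∀ _ : Fin N, (∀ j, Fin (n j) → ℝ) → (∀ j, Fin (m j) → ℝ) → ℕ → ℝ)
    (S : ∀ _ : Fin N, (∀ j, Fin (n j) → ℝ) → ℝ)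
    (i : Fin N) (γ : ∀ j, ℕ → Fin (m j) → ℝ) : ℝ :=
  S i (traj f x0 γ T) +
    ∑ k ∈ Finset.range T, L i (traj f x0 γ k) (fun j => γ j k) k

noncomputable def potCost {N : ℕ} {n m : Fin N → ℕ} (T : ℕ)
    (f : ∀ i : Fin N, (Fin (n i) → ℝ) → (Fin (m i) → ℝ) → ℕ → (Fin (n i) → ℝ))
    (x0 : ∀ i, Fin (n i) → ℝ)
    (P : (∀ j, Fin (n j) → ℝ) → (∀ j, Fin (m j) → ℝ) → ℕ → ℝ)
    (R : (∀ j, Fin (n j) → ℝ) → ℝ)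
    (γ : ∀ j, ℕ → Fin (m j) → ℝ) : ℝ :=
  R (traj f x0 γ T) +
    ∑ k ∈ Finset.range T, P (traj f x0 γ k) (fun j => γ j k) k

section PartialDerivative

variable {𝕜 ι : Type*} [RCLike 𝕜] [Fintype ι] [DecidableEq ι]
  {E : ι → Type*} [∀ j, NormedAddCommGroup (E j)] [∀ j, NormedSpace 𝕜 (E j)]
  {F : Type*} [NormedAddCommGroup F] [NormedSpace 𝕜 F]

theorem Differentiable.comp_update {g : (∀ j, E j) → F} (hg : Differentiable 𝕜 g)
    (x : ∀ j, E j) (i : ι) : Differentiable 𝕜 (fun a : E i => g (update x i a)) :=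
  fun a => (hg _).comp a (hasFDerivAt_update x a).differentiableAt

theorem update_eq_of_fderiv_update_eq_zero {g : (∀ j, E j) → F} (hg : Differentiable 𝕜 g)
    {i : ι} (h0 : ∀ x : ∀ j, E j, fderiv 𝕜 (fun a => g (update x i a)) (x i) = 0)
    (x : ∀ j, E j) (a : E i) : g (update x i a) = g x := by
  have hzero : ∀ b : E i, fderiv 𝕜 (fun a => g (update x i a)) b = 0 := fun b => by
    simpa only [update_idem, update_self] using h0 (update x i b)
  simpa only [update_eq_self] using
    is_const_of_fderiv_eq_zero (hg.comp_update x i) hzero a (x i)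

theorem sub_update_eq_sub_of_fderiv_update_eq {g h : (∀ j, E j) → F}
    (hg : Differentiable 𝕜 g) (hh : Differentiable 𝕜 h) {i : ι}
    (heq : ∀ x : ∀ j, E j, fderiv 𝕜 (fun a => g (update x i a)) (x i)
      = fderiv 𝕜 (fun a => h (update x i a)) (x i))
    (x : ∀ j, E j) (a : E i) :
    g (update x i a) - h (update x i a) = g x - h x := by
  refine update_eq_of_fderiv_update_eq_zero (hg.sub hh) (fun y => ?_) x a
  simp only [Pi.sub_apply]
  rw [fderiv_fun_sub (hg.comp_update y i _) (hh.comp_update y i _), heq, sub_self]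

theorem sub_update_update_eq_sub_of_fderiv_update_eq {G : ι → Type*}
    [∀ j, NormedAddCommGroup (G j)] [∀ j, NormedSpace 𝕜 (G j)]
    {g h : (∀ j, E j) → (∀ j, G j) → F}
    (hg : Differentiable 𝕜 (fun p : (∀ j, E j) × (∀ j, G j) => g p.1 p.2))
    (hh : Differentiable 𝕜 (fun p : (∀ j, E j) × (∀ j, G j) => h p.1 p.2)) {i : ι}
    (hx : ∀ x u, fderiv 𝕜 (fun a => g (update x i a) u) (x i)
      = fderiv 𝕜 (fun a => h (update x i a) u) (x i))
    (hu : ∀ x u, fderiv 𝕜 (fun b => g x (update u i b)) (u i)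
      = fderiv 𝕜 (fun b => h x (update u i b)) (u i))
    (x : ∀ j, E j) (u : ∀ j, G j) (a : E i) (b : G i) :
    g (update x i a) (update u i b) - h (update x i a) (update u i b) = g x u - h x u := by
  have hg_left (u) : Differentiable 𝕜 (g · u) :=
    hg.comp (differentiable_id.prodMk (differentiable_const u))
  have hh_left (u) : Differentiable 𝕜 (h · u) :=
    hh.comp (differentiable_id.prodMk (differentiable_const u))
  have hg_right (x) : Differentiable 𝕜 (g x) :=
    hg.comp ((differentiable_const x).prodMk differentiable_id)
  have hh_right (x) : Differentiable 𝕜 (h x) :=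
    hh.comp ((differentiable_const x).prodMk differentiable_id)
  calc g (update x i a) (update u i b) - h (update x i a) (update u i b)
      = g (update x i a) u - h (update x i a) u :=
        sub_update_eq_sub_of_fderiv_update_eq (hg_right _) (hh_right _) (hu _) u b
    _ = g x u - h x u :=
        sub_update_eq_sub_of_fderiv_update_eq (hg_left u) (hh_left u) (hx · u) x a

end PartialDerivative

section Game

variable {N : ℕ} {n m : Fin N → ℕ}
  (f : ∀ i : Fin N, (Fin (n i) → ℝ) → (Fin (m i) → ℝ) → ℕ → (Fin (n i) → ℝ))
  (x0 : ∀ i, Fin (n i) → ℝ)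

theorem traj_update_apply_of_ne (γ : ∀ j, ℕ → Fin (m j) → ℝ) {i j : Fin N}
    (ν : ℕ → Fin (m i) → ℝ) (hji : j ≠ i) (k : ℕ) :
    traj f x0 (update γ i ν) k j = traj f x0 γ k j := by
  induction k with
  | zero => rfl
  | succ k ih => simp only [traj, ih, update_of_ne hji]

theorem traj_update (γ : ∀ j, ℕ → Fin (m j) → ℝ) {i : Fin N} (ν : ℕ → Fin (m i) → ℝ)
    (k : ℕ) :
    traj f x0 (update γ i ν) k = update (traj f x0 γ k) i (traj f x0 (update γ i ν) k i) :=
  eq_update_iff.mpr ⟨rfl, fun _ hji => traj_update_apply_of_ne f x0 γ ν hji k⟩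

theorem agentCost_sub_potCost_update (T : ℕ)
    (L : ∀ _ : Fin N, (∀ j, Fin (n j) → ℝ) → (∀ j, Fin (m j) → ℝ) → ℕ → ℝ)
    (S : ∀ _ : Fin N, (∀ j, Fin (n j) → ℝ) → ℝ)
    (P : (∀ j, Fin (n j) → ℝ) → (∀ j, Fin (m j) → ℝ) → ℕ → ℝ)
    (R : (∀ j, Fin (n j) → ℝ) → ℝ) {i : Fin N}
    (hL : ∀ k < T, Differentiable ℝ (fun p : (∀ j, Fin (n j) → ℝ) × (∀ j, Fin (m j) → ℝ) =>
      L i p.1 p.2 k))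
    (hP : ∀ k < T, Differentiable ℝ (fun p : (∀ j, Fin (n j) → ℝ) × (∀ j, Fin (m j) → ℝ) =>
      P p.1 p.2 k))
    (hS : Differentiable ℝ (S i)) (hR : Differentiable ℝ R)
    (hx : ∀ x u, ∀ k < T, fderiv ℝ (fun a => L i (update x i a) u k) (x i)
      = fderiv ℝ (fun a => P (update x i a) u k) (x i))
    (hu : ∀ x u, ∀ k < T, fderiv ℝ (fun b => L i x (update u i b) k) (u i)
      = fderiv ℝ (fun b => P x (update u i b) k) (u i))
    (hT : ∀ x, fderiv ℝ (fun a => S i (update x i a)) (x i)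
      = fderiv ℝ (fun a => R (update x i a)) (x i))
    (γ : ∀ j, ℕ → Fin (m j) → ℝ) (ν : ℕ → Fin (m i) → ℝ) :
    agentCost T f x0 L S i (update γ i ν) - potCost T f x0 P R (update γ i ν)
      = agentCost T f x0 L S i γ - potCost T f x0 P R γ := by
  set x := traj f x0 γ
  set x' := traj f x0 (update γ i ν)
  have hstates (k : ℕ) : x' k = update (x k) i (x' k i) := traj_update f x0 γ ν k
  have hactions (k : ℕ) : (fun j => update γ i ν j k) = update (fun j => γ j k) i (ν k) :=
    funext (apply_update (fun _ g => g k) γ i ν)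
  have hterminal : S i (x' T) - R (x' T) = S i (x T) - R (x T) := by
    rw [hstates]
    exact sub_update_eq_sub_of_fderiv_update_eq hS hR hT _ _
  have hrunning : ∀ k ∈ Finset.range T,
      L i (x' k) (fun j => update γ i ν j k) k - P (x' k) (fun j => update γ i ν j k) k
        = L i (x k) (fun j => γ j k) k - P (x k) (fun j => γ j k) k := fun k hk => by
    have hkT := Finset.mem_range.mp hk
    rw [hstates, hactions]
    exact sub_update_update_eq_sub_of_fderiv_update_eq (g := (L i · · k)) (h := (P · · k))
      (hL k hkT) (hP k hkT) (hx · · k hkT) (hu · · k hkT) _ _ _ _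
  have hsum := Finset.sum_congr rfl hrunning
  simp only [Finset.sum_sub_distrib] at hsum
  simp only [agentCost, potCost]
  linarith

end Game

/-- Under continuous differentiability of `L^i`, `P`,
`S^i`, `R`, if for every agent `i`, every `k < T`, and all joint states `x`
and actions `u` the partial derivatives of `L^i` and `P` with respect to
agent `i`'s state block and action block coincide, and the partial
derivatives of `S^i` and `R` with respect to agent `i`'s state block
coincide, then the game is a constrained dynamic potential game with
potential `(P, R)`: for every agent `i`, strategy profile `γ`, and
alternative strategy `ν` of agent `i`,
`J^i(γ) − J^i(ν, γ^{-i}) = J(γ) − J(ν, γ^{-i})`. -/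
theorem gradient_conditions_imply_potential_game
    {N T : ℕ} (n m : Fin N → ℕ)
    (f : ∀ i : Fin N, (Fin (n i) → ℝ) → (Fin (m i) → ℝ) → ℕ → (Fin (n i) → ℝ))
    (x0 : ∀ i, Fin (n i) → ℝ)
    (L : ∀ _ : Fin N, (∀ j, Fin (n j) → ℝ) → (∀ j, Fin (m j) → ℝ) → ℕ → ℝ)
    (S : ∀ _ : Fin N, (∀ j, Fin (n j) → ℝ) → ℝ)
    (P : (∀ j, Fin (n j) → ℝ) → (∀ j, Fin (m j) → ℝ) → ℕ → ℝ)
    (R : (∀ j, Fin (n j) → ℝ) → ℝ)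
    (hLsmooth : ∀ (i : Fin N) (k : ℕ), k < T →
      ContDiff ℝ 1 (fun p : (∀ j, Fin (n j) → ℝ) × (∀ j, Fin (m j) → ℝ) => L i p.1 p.2 k))
    (hPsmooth : ∀ k : ℕ, k < T →
      ContDiff ℝ 1 (fun p : (∀ j, Fin (n j) → ℝ) × (∀ j, Fin (m j) → ℝ) => P p.1 p.2 k))
    (hSsmooth : ∀ i : Fin N, ContDiff ℝ 1 (S i))
    (hRsmooth : ContDiff ℝ 1 R)
    (hx : ∀ (i : Fin N) (x : ∀ j, Fin (n j) → ℝ) (u : ∀ j, Fin (m j) → ℝ) (k : ℕ),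
      k < T →
      fderiv ℝ (fun xi : Fin (n i) → ℝ => L i (Function.update x i xi) u k) (x i)
        = fderiv ℝ (fun xi : Fin (n i) → ℝ => P (Function.update x i xi) u k) (x i))
    (hu : ∀ (i : Fin N) (x : ∀ j, Fin (n j) → ℝ) (u : ∀ j, Fin (m j) → ℝ) (k : ℕ),
      k < T →
      fderiv ℝ (fun ui : Fin (m i) → ℝ => L i x (Function.update u i ui) k) (u i)
        = fderiv ℝ (fun ui : Fin (m i) → ℝ => P x (Function.update u i ui) k) (u i))
    (hT : ∀ (i : Fin N) (x : ∀ j, Fin (n j) → ℝ),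
      fderiv ℝ (fun xi : Fin (n i) → ℝ => S i (Function.update x i xi)) (x i)
        = fderiv ℝ (fun xi : Fin (n i) → ℝ => R (Function.update x i xi)) (x i)) :
    ∀ (i : Fin N) (γ : ∀ j, ℕ → Fin (m j) → ℝ) (ν : ℕ → Fin (m i) → ℝ),
      agentCost T f x0 L S i γ - agentCost T f x0 L S i (Function.update γ i ν)
        = potCost T f x0 P R γ - potCost T f x0 P R (Function.update γ i ν) := by
  intro i γ ν
  have hdev := agentCost_sub_potCost_update f x0 T L S P R
    (fun k hk => (hLsmooth i k hk).differentiable one_ne_zero)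
    (fun k hk => (hPsmooth k hk).differentiable one_ne_zero)
    ((hSsmooth i).differentiable one_ne_zero) (hRsmooth.differentiable one_ne_zero)
    (hx i) (hu i) (hT i) γ ν
  linarith
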